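/- The Hermite-type determinant of shifted Gaussian kernels is positive: for distinct reals x₁ < ... < xₙ and y₁ < ... < yₙ and t > 0, det[exp(−(x_i − y_j)²/(2t))]_{1 ≤ i,j ≤ n} > 0. -/

import Mathlib

/-!
Completing the square, `exp (-(x - y) ^ 2 / (2 * t)) = exp (-x ^ 2 / (2 * t)) *
exp (-y ^ 2 / (2 * t)) * exp (x * (y / t))`, so it suffices to show `det [exp (a i * b j)] > 0`
for increasing `a` and `b`. This determinant never vanishes: a kernel vector `c` would give an
exponential sum `∑ j, c j * exp (b j * z)` with `n` distinct zeros, which Rolle's theorem rules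
out by induction on `n`. As the increasing sequences `b` form a convex set, the sign is the one at
`b j = j`, where the matrix is the Vandermonde matrix of the `exp (a i)`.
-/

open Finset Real

theorem IsPreconnected.pos_of_ne_zero {X : Type*} [TopologicalSpace X] {s : Set X}
    (hs : IsPreconnected s) {f : X → ℝ} (hf : ContinuousOn f s) (hne : ∀ x ∈ s, f x ≠ 0)
    {a b : X} (ha : a ∈ s) (hb : b ∈ s) (hfa : 0 < f a) : 0 < f b := by
  by_contra! hfb
  obtain ⟨c, hc, hfc⟩ := hs.intermediate_value hb ha hf ⟨hfb, hfa.le⟩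
  exact hne c hc hfc

theorem convex_setOf_strictMono {ι : Type*} [Preorder ι] :
    Convex ℝ {f : ι → ℝ | StrictMono f} := by
  intro f hf g hg a b ha hb hab i j hij
  simp only [Pi.add_apply, Pi.smul_apply, smul_eq_mul]
  rcases ha.eq_or_lt with rfl | ha
  · rw [zero_add] at hab
    simpa [hab] using hg hij
  · nlinarith [hf hij, hg hij, mul_le_mul_of_nonneg_left (hg hij).le hb]

theorem exists_strictMono_deriv_eq_zero {n : ℕ} {f : ℝ → ℝ} (hf : Differentiable ℝ f)
    {a : Fin (n + 1) → ℝ} (ha : StrictMono a) (hfa : ∀ i, f (a i) = 0) :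
    ∃ a' : Fin n → ℝ, StrictMono a' ∧ ∀ i, deriv f (a' i) = 0 := by
  have hrolle (i : Fin n) : ∃ z ∈ Set.Ioo (a i.castSucc) (a i.succ), deriv f z = 0 :=
    exists_deriv_eq_zero (ha i.castSucc_lt_succ) hf.continuous.continuousOn
      (by rw [hfa, hfa])
  choose a' ha'_mem ha'_deriv using hrolle
  refine ⟨a', fun i j hij => ?_, ha'_deriv⟩
  calc a' i < a i.succ := (ha'_mem i).2
    _ ≤ a j.castSucc := ha.monotone (Fin.succ_le_castSucc_iff.mpr hij)
    _ < a' j := (ha'_mem j).1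

theorem hasDerivAt_sum_mul_exp {ι : Type*} [Fintype ι] (c b : ι → ℝ) (z : ℝ) :
    HasDerivAt (fun z => ∑ j, c j * exp (b j * z)) (∑ j, c j * b j * exp (b j * z)) z := by
  refine HasDerivAt.fun_sum fun j _ => ?_
  simpa [mul_comm, mul_assoc, mul_left_comm] using
    (((hasDerivAt_id z).const_mul (b j)).exp).const_mul (c j)

theorem eq_zero_of_sum_mul_exp_eq_zero {n : ℕ} {b c a : Fin n → ℝ} (hb : Function.Injective b)
    (ha : StrictMono a) (h : ∀ i, ∑ j, c j * exp (b j * a i) = 0) : c = 0 := by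
  induction n with
  | zero => exact funext finZeroElim
  | succ n ih =>
    -- Dividing by `exp (b 0 * z)` kills the frequency `b 0` upon differentiation.
    set g : ℝ → ℝ := fun z => ∑ j, c j * exp ((b j - b 0) * z)
    have hg_eq (z : ℝ) : g z = exp (-(b 0 * z)) * ∑ j, c j * exp (b j * z) := by
      simp only [g, Finset.mul_sum]
      refine sum_congr rfl fun j _ => ?_
      rw [mul_left_comm, ← exp_add]
      ring_nf
    have hg_deriv (z : ℝ) : deriv g z =
        ∑ j : Fin n, c j.succ * (b j.succ - b 0) * exp ((b j.succ - b 0) * z) := by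
      rw [(hasDerivAt_sum_mul_exp c (fun j => b j - b 0) z).deriv, Fin.sum_univ_succ]
      simp
    obtain ⟨a', ha', hga'⟩ := exists_strictMono_deriv_eq_zero
      (fun z => (hasDerivAt_sum_mul_exp c (fun j => b j - b 0) z).differentiableAt) ha
      (fun i => (hg_eq (a i)).trans (by rw [h, mul_zero]))
    have hc' := ih (b := fun j => b j.succ - b 0) (c := fun j => c j.succ * (b j.succ - b 0))
      (fun i j hij => Fin.succ_injective _ (hb (sub_left_injective hij))) ha'
      (fun i => (hg_deriv _).symm.trans (hga' i))
    have hc_succ (j : Fin n) : c j.succ = 0 := by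
      simpa [sub_eq_zero, hb.ne (Fin.succ_ne_zero j)] using congrFun hc' j
    have hc_zero : c 0 = 0 := by
      simpa [Fin.sum_univ_succ, hc_succ] using h 0
    exact funext (Fin.cases hc_zero hc_succ)

theorem det_exp_mul_ne_zero {n : ℕ} {a b : Fin n → ℝ} (ha : StrictMono a)
    (hb : Function.Injective b) : (Matrix.of fun i j => exp (a i * b j)).det ≠ 0 := by
  intro hdet
  obtain ⟨c, hc, hMc⟩ := Matrix.exists_mulVec_eq_zero_iff.mpr hdet
  refine hc (eq_zero_of_sum_mul_exp_eq_zero hb ha fun i => ?_)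
  simpa [Matrix.mulVec, dotProduct, mul_comm] using congrFun hMc i

theorem det_exp_mul_natCast_pos {n : ℕ} {a : Fin n → ℝ} (ha : StrictMono a) :
    0 < (Matrix.of fun i (j : Fin n) => exp (a i * j)).det := by
  have : (Matrix.of fun i (j : Fin n) => exp (a i * j)) = Matrix.vandermonde (exp ∘ a) := by
    ext i j
    simp [mul_comm, ← exp_nat_mul]
  rw [this, Matrix.det_vandermonde]
  exact prod_pos fun i _ => prod_pos fun j hj =>
    sub_pos.mpr (exp_lt_exp.mpr (ha (mem_Ioi.mp hj)))

theorem det_exp_mul_pos {n : ℕ} {a b : Fin n → ℝ} (ha : StrictMono a) (hb : StrictMono b) :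
    0 < (Matrix.of fun i j => exp (a i * b j)).det := by
  -- Deform `b` through strictly increasing sequences into `j ↦ j`, a Vandermonde case.
  refine convex_setOf_strictMono.isPreconnected.pos_of_ne_zero
    (f := fun b : Fin n → ℝ => (Matrix.of fun i j => exp (a i * b j)).det)
    (by fun_prop) (fun b' hb' => det_exp_mul_ne_zero ha hb'.injective)
    (a := fun j : Fin n => (j : ℝ)) (fun i j hij => by simpa using hij) hb
    (det_exp_mul_natCast_pos ha)

theorem Matrix.det_mul_column_mul_row {R ι : Type*} [CommRing R] [Fintype ι] [DecidableEq ι]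
    (u v : ι → R) (A : Matrix ι ι R) :
    (Matrix.of fun i j => u i * v j * A i j).det = (∏ i, u i) * (∏ j, v j) * A.det := by
  calc (Matrix.of fun i j => u i * v j * A i j).det
      = (Matrix.of fun i j => u i * (Matrix.of fun i j => v j * A i j) i j).det := by
        simp only [Matrix.of_apply, mul_assoc]
    _ = (∏ i, u i) * (∏ j, v j) * A.det := by
        rw [Matrix.det_mul_column, Matrix.det_mul_row, mul_assoc]

theorem gaussian_kernel_det_pos (n : ℕ) (x y : Fin n → ℝ)
    (hx : StrictMono x) (hy : StrictMono y) (t : ℝ) (ht : 0 < t) :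
    0 < Matrix.det (Matrix.of fun i j => Real.exp (-(x i - y j) ^ 2 / (2 * t))) := by
  have hfactor : (Matrix.of fun i j => exp (-(x i - y j) ^ 2 / (2 * t))) =
      Matrix.of fun i j => exp (-x i ^ 2 / (2 * t)) * exp (-y j ^ 2 / (2 * t)) *
        (Matrix.of fun i j => exp (x i * (y j / t))) i j := by
    ext i j
    simp only [Matrix.of_apply, ← exp_add]
    congr 1
    field_simp
    ring
  have hy' : StrictMono fun j => y j / t := fun i j hij => div_lt_div_of_pos_right (hy hij) ht
  rw [hfactor, Matrix.det_mul_column_mul_row]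
  have := det_exp_mul_pos hx hy'
  positivity
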